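/- Let n ≥ 1, λ ∈ ℂⁿ, let a ≤ b be real numbers and r > 0. Then there exists a constant C > 0 such that for every choice of signs ς ∈ {+1, −1}ⁿ and every s ∈ ℂ with a ≤ Re s ≤ b and |s − (λ_l − κ)| ≥ r for all l ∈ {1,…,n} and all κ ∈ ℕ, one has |∏_{l=1}^n Γ(s − λ_l) e^{ς_l · πi(s−λ_l)/2}| ≤ C · (|Im s| + 1)^{n(Re s − 1/2) − Re(λ_1 + ⋯ + λ_n)}. -/

import Mathlib

set_option maxHeartbeats 1000000

open scoped Real
open Filter Topology

lemma L1 (t : ℝ) : ‖Complex.Gamma (1/2 + t * Complex.I)‖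
    ≤ Real.sqrt (2 * π) * Real.exp (-(π * |t|) / 2) := by
  set s : ℂ := 1/2 + t * Complex.I with hs
  have h1s : 1 - s = (starRingEnd ℂ) s := by
    simp [hs, Complex.ext_iff]
    norm_num
  have hrefl := Complex.Gamma_mul_Gamma_one_sub s
  rw [h1s, Complex.Gamma_conj, Complex.mul_conj] at hrefl
  have hsin : Complex.sin (π * s) = Real.cosh (π * t) := by
    have : (π : ℂ) * s = π/2 + (π * t) * Complex.I := by
      rw [hs]; push_cast; ring
    rw [this, Complex.sin_add, Complex.sin_pi_div_two, Complex.cos_pi_div_two,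
      Complex.cos_mul_I]
    push_cast [Complex.cosh_ofReal_re]
    simp [Complex.ext_iff, ← Complex.ofReal_cosh]
  rw [hsin] at hrefl
  have hcosh : (0:ℝ) < Real.cosh (π * t) := Real.cosh_pos _
  have hnsq : Complex.normSq (Complex.Gamma s) = π / Real.cosh (π * t) := by
    exact_mod_cast hrefl
  have habs : ‖Complex.Gamma s‖ = Real.sqrt (π / Real.cosh (π * t)) := by
    rw [Complex.norm_def, hnsq]
  rw [habs]
  have hch : Real.exp (|π * t|) / 2 ≤ Real.cosh (π * t) := by
    rcases abs_cases (π * t) with ⟨h, _⟩ | ⟨h, _⟩ <;> rw [h] <;>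
      rw [Real.cosh_eq] <;> nlinarith [Real.exp_pos (π*t), Real.exp_pos (-(π*t))]
  rw [abs_mul, abs_of_pos Real.pi_pos] at hch
  have h2 : π / Real.cosh (π * t) ≤ 2 * π * Real.exp (-(π * |t|)) := by
    rw [div_le_iff₀ hcosh]
    have key : 2*π*Real.exp (-(π*|t|)) * (Real.exp (π*|t|)/2)
        ≤ 2*π*Real.exp (-(π*|t|)) * Real.cosh (π*t) :=
      mul_le_mul_of_nonneg_left hch (by positivity)
    have hee : Real.exp (-(π*|t|)) * Real.exp (π*|t|) = 1 := by
      rw [← Real.exp_add]; simp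
    nlinarith [key, hee, Real.pi_pos]
  calc Real.sqrt (π / Real.cosh (π*t)) ≤ Real.sqrt (2*π*Real.exp (-(π*|t|))) :=
        Real.sqrt_le_sqrt h2
    _ = Real.sqrt (2*π) * Real.exp (-(π*|t|)/2) := by
        rw [Real.sqrt_mul (by positivity), ← Real.exp_half]


-- oscillation bound for f(y) = 2y/(y²+t²) on [a, a+1]
lemma osc (t a y : ℝ) (ht : 1 ≤ t) (ha : 1/2 ≤ a) (h1 : a ≤ y) (h2 : y ≤ a + 1) :
    |2*y/(y^2+t^2) - 2*a/(a^2+t^2)| ≤ 4/(a^2+t^2) := by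
  have hD1 : (0:ℝ) < a^2+t^2 := by positivity
  have hD2 : (0:ℝ) < y^2+t^2 := by positivity
  have ha0 : (0:ℝ) ≤ a := by linarith
  have hy0 : (0:ℝ) ≤ y := by linarith
  have P : 2*a*(y^2+t^2) - 2*y*(a^2+t^2) ≤ 4*(y^2+t^2) := by
    nlinarith [mul_nonneg (sq_nonneg t) (sub_nonneg.2 h1),
      mul_nonneg (mul_nonneg ha0 hy0) (by linarith : (0:ℝ) ≤ a+1-y),
      mul_nonneg hy0 (sub_nonneg.2 h1)]
  have Q : 2*y*(a^2+t^2) - 2*a*(y^2+t^2) ≤ 4*(y^2+t^2) := by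
    nlinarith [mul_nonneg (mul_nonneg ha0 hy0) (sub_nonneg.2 h1),
      mul_nonneg (sq_nonneg t) (by linarith : (0:ℝ) ≤ a+1-y)]
  rw [abs_le]
  constructor
  · rw [neg_le, neg_sub, div_sub_div _ _ hD1.ne' hD2.ne',
      div_le_div_iff₀ (mul_pos hD1 hD2) hD1]
    nlinarith [mul_le_mul_of_nonneg_right P hD1.le]
  · rw [div_sub_div _ _ hD2.ne' hD1.ne', div_le_div_iff₀ (mul_pos hD2 hD1) hD1]
    nlinarith [mul_le_mul_of_nonneg_right Q hD1.le]

-- FTC: ∫_c^d 2y/(y²+t²) dy = log(d²+t²) − log(c²+t²)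
lemma ftc (t c d : ℝ) (ht : 1 ≤ t) :
    ∫ y in c..d, 2*y/(y^2+t^2) = Real.log (d^2+t^2) - Real.log (c^2+t^2) := by
  have hcont : Continuous (fun y : ℝ => 2*y/(y^2+t^2)) := by
    apply Continuous.div (by continuity) (by continuity)
    intro y; positivity
  have key := intervalIntegral.integral_eq_sub_of_hasDerivAt
    (f := fun y : ℝ => Real.log (y^2+t^2)) (f' := fun y : ℝ => 2*y/(y^2+t^2))
    (a := c) (b := d) (fun y _ => by
      have hne : y^2+t^2 ≠ 0 := by positivity
      have h1 : HasDerivAt (fun y : ℝ => y^2+t^2) (2*y) y := by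
        simpa using ((hasDerivAt_pow 2 y).add_const (t^2))
      have := (Real.hasDerivAt_log hne).comp y h1
      simpa [div_eq_inv_mul, mul_comm, Function.comp_def] using this)
    (hcont.intervalIntegrable _ _)
  simpa using key


lemma fcont (t : ℝ) (ht : 1 ≤ t) : Continuous (fun y : ℝ => 2*y/(y^2+t^2)) := by
  apply Continuous.div (by continuity) (by continuity)
  intro y; positivity

lemma jbound (σ t a : ℝ) (h1 : 1/2 ≤ σ) (h2 : σ ≤ 3/2) (ht : 1 ≤ t) (ha : 1/2 ≤ a) :
    (σ - 1/2) * (2*a/(a^2+t^2) - 4/(a^2+t^2))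
      ≤ Real.log ((a + (σ - 1/2))^2+t^2) - Real.log (a^2+t^2) := by
  rw [← ftc t a (a + (σ - 1/2)) ht]
  have hle : a ≤ a + (σ - 1/2) := by linarith
  calc (σ - 1/2) * (2*a/(a^2+t^2) - 4/(a^2+t^2))
      = ∫ _ in a..(a + (σ - 1/2)), (2*a/(a^2+t^2) - 4/(a^2+t^2)) := by
        rw [intervalIntegral.integral_const, smul_eq_mul, add_sub_cancel_left]
    _ ≤ ∫ y in a..(a + (σ - 1/2)), 2*y/(y^2+t^2) := by
        apply intervalIntegral.integral_mono_on hle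
          (intervalIntegrable_const) ((fcont t ht).intervalIntegrable _ _)
        intro y hy
        have := abs_le.1 (osc t a y ht ha hy.1 (by linarith [hy.2]))
        linarith [this.1]

lemma jbound2 (t a : ℝ) (ht : 1 ≤ t) (ha : 1/2 ≤ a) :
    Real.log ((a+1)^2+t^2) - Real.log (a^2+t^2) - 4/(a^2+t^2) ≤ 2*a/(a^2+t^2) := by
  rw [← ftc t a (a+1) ht]
  have key : ∫ y in a..(a+1), 2*y/(y^2+t^2)
      ≤ ∫ _ in a..(a+1), (2*a/(a^2+t^2) + 4/(a^2+t^2)) := by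
    apply intervalIntegral.integral_mono_on (by linarith)
      ((fcont t ht).intervalIntegrable _ _) (intervalIntegrable_const)
    intro y hy
    have := abs_le.1 (osc t a y ht ha hy.1 hy.2)
    linarith [this.2]
  rw [intervalIntegral.integral_const] at key
  simp only [add_sub_cancel_left, smul_eq_mul, one_mul] at key
  linarith

lemma vsum (t : ℝ) (ht : 1 ≤ t) (n : ℕ) :
    ∑ j ∈ Finset.range (n+1), 4/(((1:ℝ)/2+j)^2+t^2) ≤ 8 := by
  have step : ∀ j ∈ Finset.range (n+1), 4/(((1:ℝ)/2+j)^2+t^2)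
      ≤ 8/((j:ℝ)+1) - 8/((j:ℝ)+1+1) := by
    intro j _
    have hj : (0:ℝ) ≤ (j:ℝ) := Nat.cast_nonneg j
    rw [div_sub_div _ _ (by positivity) (by positivity), div_le_div_iff₀ (by positivity)
      (by positivity)]
    nlinarith [sq_nonneg ((j:ℝ) - 1), sq_nonneg t, mul_nonneg hj hj]
  calc ∑ j ∈ Finset.range (n+1), 4/(((1:ℝ)/2+j)^2+t^2)
      ≤ ∑ j ∈ Finset.range (n+1), (8/((j:ℝ)+1) - 8/((j:ℝ)+1+1)) := Finset.sum_le_sum step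
    _ = 8/((0:ℝ)+1) - 8/((n:ℝ)+1+1) := by
        have := Finset.sum_range_sub' (f := fun j : ℕ => 8/((j:ℝ)+1)) (n := n+1)
        simpa [Nat.cast_add] using this
    _ ≤ 8 := by
        have : (0:ℝ) < (n:ℝ)+1+1 := by positivity
        have h8 : (0:ℝ) ≤ 8/((n:ℝ)+1+1) := by positivity
        norm_num; linarith


lemma keylog (σ t : ℝ) (n : ℕ) (h1 : 1/2 ≤ σ) (h2 : σ ≤ 3/2) (ht : 1 ≤ t) (hn : 1 ≤ n) :
    (2*σ-1) * Real.log n + ∑ j ∈ Finset.range (n+1), Real.log (((1:ℝ)/2+j)^2+t^2)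
      ≤ 16 + (2*σ-1) * Real.log (t+1)
        + ∑ j ∈ Finset.range (n+1), Real.log ((σ+j)^2+t^2) := by
  have hθ0 : 0 ≤ σ - 1/2 := by linarith
  have hθ1 : σ - 1/2 ≤ 1 := by linarith
  set L : ℕ → ℝ := fun j => Real.log (((1:ℝ)/2+j)^2+t^2) with hL
  set F : ℕ → ℝ := fun j => Real.log ((σ+(j:ℝ))^2+t^2) with hF
  set V : ℕ → ℝ := fun j => 4/(((1:ℝ)/2+j)^2+t^2) with hV
  have hper : ∀ j : ℕ, (σ-1/2) * (L (j+1) - L j - 2*(V j)) ≤ F j - L j := by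
    intro j
    have ha : (1:ℝ)/2 ≤ 1/2+(j:ℝ) := by
      have : (0:ℝ) ≤ (j:ℝ) := Nat.cast_nonneg j
      linarith
    have hb := jbound σ t (1/2+(j:ℝ)) h1 h2 ht ha
    have heq : ((1:ℝ)/2+(j:ℝ)) + (σ-1/2) = σ + (j:ℝ) := by ring
    rw [heq] at hb
    have hb2 := jbound2 t (1/2+(j:ℝ)) ht ha
    have heq2 : ((1:ℝ)/2+(j:ℝ)) + 1 = 1/2+((j+1:ℕ):ℝ) := by push_cast; ring
    rw [heq2] at hb2
    have hmul := mul_le_mul_of_nonneg_left hb2 hθ0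
    simp only [hL, hF, hV]
    nlinarith [hb, hmul]
  have hsum := Finset.sum_le_sum (fun j (_ : j ∈ Finset.range (n+1)) => hper j)
  have lhs_eq : ∑ j ∈ Finset.range (n+1), (σ-1/2)*(L (j+1) - L j - 2*V j)
      = (σ-1/2)*(L (n+1) - L 0 - 2*∑ j ∈ Finset.range (n+1), V j) := by
    rw [← Finset.mul_sum]
    congr 1
    rw [Finset.sum_sub_distrib, Finset.sum_range_sub L (n+1), ← Finset.mul_sum]
  rw [lhs_eq, Finset.sum_sub_distrib] at hsum
  have hv := vsum t ht n
  have hL1 : 2*Real.log n ≤ L (n+1) := by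
    have hpos : (0:ℝ) < (n:ℝ)^2 := by
      have : (1:ℝ) ≤ (n:ℝ) := by exact_mod_cast hn
      positivity
    have hle : ((n:ℝ))^2 ≤ ((1:ℝ)/2+((n+1:ℕ):ℝ))^2+t^2 := by
      have : (0:ℝ) ≤ (n:ℝ) := Nat.cast_nonneg n
      push_cast
      nlinarith
    have := Real.log_le_log hpos hle
    rwa [Real.log_pow, Nat.cast_ofNat] at this
  have hL0 : L 0 ≤ 2*Real.log (t+1) := by
    have hle : ((1:ℝ)/2+((0:ℕ):ℝ))^2+t^2 ≤ (t+1)^2 := by push_cast; nlinarith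
    have := Real.log_le_log (by positivity) hle
    simp only [hL]
    rw [Real.log_pow] at this
    push_cast at this ⊢
    linarith
  have hlogn : 0 ≤ Real.log n := Real.log_natCast_nonneg n
  have hlogt : 0 ≤ Real.log (t+1) := Real.log_nonneg (by linarith)
  have e1 : (σ-1/2)*(2*Real.log n - 2*Real.log (t+1) - 16)
      ≤ (σ-1/2)*(L (n+1) - L 0 - 2*∑ j ∈ Finset.range (n+1), V j) :=
    mul_le_mul_of_nonneg_left (by linarith) hθ0
  have e2 : (2*σ-1)*Real.log n - (2*σ-1)*Real.log (t+1) - 16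
      ≤ (σ-1/2)*(2*Real.log n - 2*Real.log (t+1) - 16) := by nlinarith [hθ1, hθ0, hlogn, hlogt]
  linarith [hsum, e1, e2]


lemma expkey (σ t : ℝ) (n : ℕ) (h1 : 1/2 ≤ σ) (h2 : σ ≤ 3/2) (ht : 1 ≤ t) (hn : 1 ≤ n) :
    (n:ℝ)^(2*σ-1) * ∏ j ∈ Finset.range (n+1), (((1:ℝ)/2+j)^2+t^2)
      ≤ Real.exp 16 * (t+1)^(2*σ-1) * ∏ j ∈ Finset.range (n+1), ((σ+j)^2+t^2) := by
  have hn0 : (0:ℝ) < n := by exact_mod_cast hn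
  have kl := keylog σ t n h1 h2 ht hn
  have expkl := Real.exp_le_exp.2 kl
  rw [Real.exp_add, Real.exp_add, Real.exp_add, Real.exp_sum, Real.exp_sum] at expkl
  have e1 : Real.exp ((2*σ-1) * Real.log n) = (n:ℝ)^(2*σ-1) := by
    rw [Real.rpow_def_of_pos hn0, mul_comm]
  have e2 : Real.exp ((2*σ-1) * Real.log (t+1)) = (t+1)^(2*σ-1) := by
    rw [Real.rpow_def_of_pos (by linarith), mul_comm]
  have e3 : ∀ j ∈ Finset.range (n+1),
      Real.exp (Real.log (((1:ℝ)/2+j)^2+t^2)) = ((1:ℝ)/2+j)^2+t^2 := by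
    intro j _; exact Real.exp_log (by positivity)
  have e4 : ∀ j ∈ Finset.range (n+1),
      Real.exp (Real.log ((σ+(j:ℝ))^2+t^2)) = (σ+(j:ℝ))^2+t^2 := by
    intro j _; exact Real.exp_log (by positivity)
  rw [e1, e2, Finset.prod_congr rfl e3, Finset.prod_congr rfl e4] at expkl
  linarith [expkl]

lemma base (σ t : ℝ) (h1 : 1/2 ≤ σ) (h2 : σ ≤ 3/2) (ht : 1 ≤ t) :
    ‖Complex.Gamma (σ + t*Complex.I)‖
      ≤ Real.exp 8 * (t+1)^(σ-1/2) * ‖Complex.Gamma (1/2 + t*Complex.I)‖ := by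
  set s : ℂ := ↑σ + ↑t*Complex.I with hs
  set s₀ : ℂ := 1/2 + ↑t*Complex.I with hs₀
  have hK0 : (0:ℝ) < Real.exp 8 * (t+1)^(σ-1/2) := by positivity
  have key : ∀ n : ℕ, 1 ≤ n → ‖Complex.GammaSeq s n‖
      ≤ Real.exp 8 * (t+1)^(σ-1/2) * ‖Complex.GammaSeq s₀ n‖ := by
    intro n hn
    have hn0 : (0:ℝ) < n := by exact_mod_cast hn
    unfold Complex.GammaSeq
    rw [norm_div, norm_mul, norm_prod, norm_div, norm_mul, norm_prod, Complex.norm_natCast]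
    have hcp : ‖(n:ℂ) ^ s‖ = (n:ℝ) ^ σ := by
      rw [(Complex.ofReal_natCast n).symm,
        Complex.norm_cpow_eq_rpow_re_of_pos hn0]
      simp [hs]
    have hcp₀ : ‖(n:ℂ) ^ s₀‖ = (n:ℝ) ^ ((1:ℝ)/2) := by
      rw [(Complex.ofReal_natCast n).symm,
        Complex.norm_cpow_eq_rpow_re_of_pos hn0]
      norm_num [hs₀, Complex.add_re]
    rw [hcp, hcp₀]
    have hA : (0:ℝ) < ∏ j ∈ Finset.range (n+1), ‖s+j‖ := by
      apply Finset.prod_pos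
      intro j _
      rw [norm_pos_iff]
      intro hz
      have : (s+j).im = 0 := by rw [hz]; simp
      simp [hs] at this
      linarith
    have hB : (0:ℝ) < ∏ j ∈ Finset.range (n+1), ‖s₀+j‖ := by
      apply Finset.prod_pos
      intro j _
      rw [norm_pos_iff]
      intro hz
      have : (s₀+j).im = 0 := by rw [hz]; simp
      simp [hs₀] at this
      linarith
    have hrw : Real.exp 8 * (t+1)^(σ-1/2) * ((n:ℝ)^((1:ℝ)/2) * (n.factorial : ℝ)
        / ∏ j ∈ Finset.range (n+1), ‖s₀+j‖)
      = (Real.exp 8 * (t+1)^(σ-1/2) * ((n:ℝ)^((1:ℝ)/2) * (n.factorial : ℝ)))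
        / ∏ j ∈ Finset.range (n+1), ‖s₀+j‖ := by ring
    rw [hrw, div_le_div_iff₀ hA hB]
    -- goal : n^σ * n! * B ≤ (e^8 * (t+1)^(σ-1/2) * (n^(1/2) * n!)) * A
    have sqA : (∏ j ∈ Finset.range (n+1), ‖s+j‖)^2
        = ∏ j ∈ Finset.range (n+1), ((σ+(j:ℝ))^2+t^2) := by
      rw [← Finset.prod_pow]
      refine Finset.prod_congr rfl fun j _ => ?_
      rw [Complex.sq_norm, Complex.normSq_apply]
      simp [hs]
      ring
    have sqB : (∏ j ∈ Finset.range (n+1), ‖s₀+j‖)^2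
        = ∏ j ∈ Finset.range (n+1), (((1:ℝ)/2+(j:ℝ))^2+t^2) := by
      rw [← Finset.prod_pow]
      refine Finset.prod_congr rfl fun j _ => ?_
      rw [Complex.sq_norm, Complex.normSq_apply]
      simp [hs₀]
      norm_num
      ring
    have hfact : (0:ℝ) < (n.factorial : ℝ) := by exact_mod_cast Nat.factorial_pos n
    refine le_of_pow_le_pow_left₀ (by norm_num : (2:ℕ) ≠ 0) (mul_nonneg (by positivity) hA.le) ?_
    have ek := expkey σ t n h1 h2 ht hn
    have r1 : ((n:ℝ)^σ)^2 = (n:ℝ)^(2*σ-1) * (n:ℝ) := by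
      rw [← Real.rpow_natCast ((n:ℝ)^σ) 2, ← Real.rpow_mul hn0.le,
        show σ*((2:ℕ):ℝ) = (2*σ-1) + 1 by push_cast; ring,
        Real.rpow_add hn0, Real.rpow_one]
    have r2 : ((n:ℝ)^((1:ℝ)/2))^2 = (n:ℝ) := by
      rw [← Real.rpow_natCast ((n:ℝ)^((1:ℝ)/2)) 2, ← Real.rpow_mul hn0.le,
        show (1:ℝ)/2*((2:ℕ):ℝ) = 1 by push_cast; ring, Real.rpow_one]
    have r3 : ((t+1)^(σ-1/2))^2 = (t+1)^(2*σ-1) := by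
      rw [← Real.rpow_natCast ((t+1)^(σ-1/2)) 2, ← Real.rpow_mul (by linarith : (0:ℝ) ≤ t+1),
        show (σ-1/2)*((2:ℕ):ℝ) = 2*σ-1 by push_cast; ring]
    have r4 : (Real.exp 8)^2 = Real.exp 16 := by
      rw [← Real.exp_nat_mul]; norm_num
    simp only [mul_pow]
    rw [sqA, sqB, r1, r2, r3, r4]
    -- n^(2σ-1) * n * (n!)^2 * ∏half ≤ e^16 * (t+1)^(2σ-1) * (n * (n!)^2) * ∏σ
    have hP : (0:ℝ) < ∏ j ∈ Finset.range (n+1), ((σ+(j:ℝ))^2+t^2) :=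
      Finset.prod_pos fun j _ => by positivity
    nlinarith [mul_le_mul_of_nonneg_right ek
      (le_of_lt (by positivity : (0:ℝ) < (n:ℝ) * ((n.factorial:ℝ))^2)), hP]
  have T1 : Tendsto (fun n => ‖Complex.GammaSeq s n‖) atTop
      (𝓝 (‖Complex.Gamma s‖)) := by
    simpa using (Complex.GammaSeq_tendsto_Gamma s).norm
  have T0 : Tendsto (fun n => ‖Complex.GammaSeq s₀ n‖) atTop
      (𝓝 (‖Complex.Gamma s₀‖)) := by
    simpa using (Complex.GammaSeq_tendsto_Gamma s₀).norm
  exact le_of_tendsto_of_tendsto T1 (T0.const_mul _)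
    ((eventually_ge_atTop 1).mono fun n hn => key n hn)


lemma base2 (σ t : ℝ) (h1 : 1/2 ≤ σ) (h2 : σ ≤ 3/2) (ht : 1 ≤ |t|) :
    ‖Complex.Gamma (σ + t*Complex.I)‖
      ≤ (Real.exp 8 * Real.sqrt (2*π)) * (|t|+1)^(σ-1/2) * Real.exp (-(π*|t|)/2) := by
  have main : ∀ u : ℝ, 1 ≤ u → ‖Complex.Gamma (σ + u*Complex.I)‖
      ≤ (Real.exp 8 * Real.sqrt (2*π)) * (u+1)^(σ-1/2) * Real.exp (-(π*u)/2) := by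
    intro u hu
    have hb := base σ u h1 h2 hu
    have hL := L1 u
    rw [abs_of_nonneg (by linarith : (0:ℝ) ≤ u)] at hL
    calc ‖Complex.Gamma (σ + u*Complex.I)‖
        ≤ Real.exp 8 * (u+1)^(σ-1/2) * ‖Complex.Gamma (1/2 + u*Complex.I)‖ := hb
      _ ≤ Real.exp 8 * (u+1)^(σ-1/2) * (Real.sqrt (2*π) * Real.exp (-(π*u)/2)) := by
          apply mul_le_mul_of_nonneg_left hL (by positivity)
      _ = (Real.exp 8 * Real.sqrt (2*π)) * (u+1)^(σ-1/2) * Real.exp (-(π*u)/2) := by ring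
  rcases abs_cases t with ⟨he, _⟩ | ⟨he, _⟩
  · rw [he] at ht ⊢; exact main t ht
  · rw [he] at ht ⊢
    have hconj : Complex.Gamma (σ + t*Complex.I)
        = (starRingEnd ℂ) (Complex.Gamma (σ + (-t)*Complex.I)) := by
      rw [← Complex.Gamma_conj]
      congr 1
      simp [Complex.ext_iff]
    rw [hconj, Complex.norm_conj]
    have := main (-t) ht
    push_cast at this
    exact this

lemma strip (k : ℕ) : ∃ C > 0, ∀ σ t : ℝ, 1/2 - k ≤ σ → σ ≤ 3/2 + k → 1 ≤ |t| →
    ‖Complex.Gamma (σ + t*Complex.I)‖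
      ≤ C * (|t|+1)^(σ-1/2) * Real.exp (-(π*|t|)/2) := by
  induction k with
  | zero =>
    refine ⟨Real.exp 8 * Real.sqrt (2*π), by positivity, fun σ t h1 h2 ht => ?_⟩
    push_cast at h1 h2
    exact base2 σ t (by linarith) (by linarith) ht
  | succ k ih =>
    obtain ⟨C, hC, hbound⟩ := ih
    refine ⟨((k:ℝ)+3)*C + 2*C, by positivity, fun σ t h1 h2 ht => ?_⟩
    have htpos : (0:ℝ) < |t| + 1 := by linarith
    have hCk3 : (0:ℝ) < ((k:ℝ)+3)*C + 2*C := by positivity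
    have hExp : (0:ℝ) < Real.exp (-(π*|t|)/2) := Real.exp_pos _
    push_cast at h1 h2
    by_cases hlow : σ < 1/2 - k
    · -- downward recurrence: Γ(w) = Γ(w+1)/w
      set w : ℂ := σ + t*Complex.I with hw
      have hwim : w.im = t := by simp [hw]
      have hwne : w ≠ 0 := by
        intro h0
        rw [h0] at hwim
        simp at hwim
        rw [← hwim] at ht
        norm_num at ht
      have hrec := Complex.Gamma_add_one w hwne
      have habs : ‖Complex.Gamma (w+1)‖ = ‖w‖ * ‖Complex.Gamma w‖ := by
        rw [hrec, norm_mul]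
      have hwp1 : w + 1 = ((σ+1:ℝ):ℂ) + t*Complex.I := by push_cast [hw]; ring
      have hup := hbound (σ+1) t (by linarith) (by linarith) ht
      rw [← hwp1] at hup
      have hwabs : (|t|+1)/2 ≤ ‖w‖ := by
        have := Complex.abs_im_le_norm w
        rw [hwim] at this
        linarith
      have hwabspos : (0:ℝ) < ‖w‖ := by linarith [htpos]
      have hΓw : ‖Complex.Gamma w‖
          = ‖Complex.Gamma (w+1)‖ / ‖w‖ := by
        rw [habs]; field_simp
      rw [hΓw]
      have hrp : (|t|+1)^(σ+1-1/2) = (|t|+1)^(σ-1/2) * (|t|+1) := by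
        rw [show σ+1-1/2 = (σ-1/2) + 1 by ring, Real.rpow_add htpos, Real.rpow_one]
      calc ‖Complex.Gamma (w+1)‖ / ‖w‖
          ≤ (C * (|t|+1)^(σ+1-1/2) * Real.exp (-(π*|t|)/2)) / ((|t|+1)/2) := by
            apply div_le_div₀ (by positivity) hup (by linarith) hwabs
        _ = 2*C * (|t|+1)^(σ-1/2) * Real.exp (-(π*|t|)/2) := by
            rw [hrp]; field_simp
        _ ≤ (((k:ℝ)+3)*C + 2*C) * (|t|+1)^(σ-1/2) * Real.exp (-(π*|t|)/2) := by
            have hrpos : (0:ℝ) < (|t|+1)^(σ-1/2) := Real.rpow_pos_of_pos htpos _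
            nlinarith [mul_pos hC (mul_pos hrpos hExp), (Nat.cast_nonneg k : (0:ℝ) ≤ (k:ℝ))]
    · by_cases hhigh : 3/2 + k < σ
      · -- upward recurrence: Γ(w) = (w-1)Γ(w-1)
        set w : ℂ := σ + t*Complex.I with hw
        have hwm1 : w - 1 = ((σ-1:ℝ):ℂ) + t*Complex.I := by push_cast [hw]; ring
        have hw1ne : w - 1 ≠ 0 := by
          intro h0
          have : (w-1).im = 0 := by rw [h0]; simp
          rw [hwm1] at this
          simp at this
          rw [this] at ht
          norm_num at ht
        have hrec := Complex.Gamma_add_one (w-1) hw1ne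
        rw [sub_add_cancel] at hrec
        have hdn := hbound (σ-1) t (by linarith) (by linarith) ht
        rw [← hwm1] at hdn
        have hwabs : ‖w-1‖ ≤ ((k:ℝ)+3) * (|t|+1) := by
          have h := Complex.norm_le_abs_re_add_abs_im (w-1)
          have hre : (w-1).re = σ-1 := by rw [hwm1]; simp
          have him : (w-1).im = t := by rw [hwm1]; simp
          rw [hre, him] at h
          have habs1 : |σ-1| ≤ (k:ℝ)+3/2 := by
            rw [abs_le]; constructor <;> nlinarith
          nlinarith [abs_nonneg t, (Nat.cast_nonneg k : (0:ℝ) ≤ (k:ℝ))]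
        have hrp : (|t|+1)^(σ-1/2) = (|t|+1)^(σ-1-1/2) * (|t|+1) := by
          rw [show σ-1/2 = (σ-1-1/2) + 1 by ring, Real.rpow_add htpos, Real.rpow_one]
        calc ‖Complex.Gamma w‖
            = ‖w-1‖ * ‖Complex.Gamma (w-1)‖ := by
              rw [hrec, norm_mul]
          _ ≤ (((k:ℝ)+3) * (|t|+1)) * (C * (|t|+1)^(σ-1-1/2) * Real.exp (-(π*|t|)/2)) := by
              apply mul_le_mul hwabs hdn (by positivity) (by positivity)
          _ = (((k:ℝ)+3)*C) * (|t|+1)^(σ-1/2) * Real.exp (-(π*|t|)/2) := by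
              rw [hrp]; ring
          _ ≤ (((k:ℝ)+3)*C + 2*C) * (|t|+1)^(σ-1/2) * Real.exp (-(π*|t|)/2) := by
              have hrpos : (0:ℝ) < (|t|+1)^(σ-1/2) := Real.rpow_pos_of_pos htpos _
              nlinarith [mul_pos hC (mul_pos hrpos hExp), (Nat.cast_nonneg k : (0:ℝ) ≤ (k:ℝ))]
      · push_neg at hlow hhigh
        have := hbound σ t (by linarith) (by linarith) ht
        have hrpos : (0:ℝ) < (|t|+1)^(σ-1/2) := Real.rpow_pos_of_pos htpos _
        nlinarith [mul_pos hC (mul_pos hrpos hExp), (Nat.cast_nonneg k : (0:ℝ) ≤ (k:ℝ)), this]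


lemma gammaStrip (c d r : ℝ) (hcd : c ≤ d) (hr : 0 < r) :
    ∃ C > 0, ∀ w : ℂ, c ≤ w.re → w.re ≤ d → (∀ κ : ℕ, r ≤ ‖w + κ‖) →
      ‖Complex.Gamma w‖
        ≤ C * (|w.im|+1)^(w.re-1/2) * Real.exp (-(π*|w.im|)/2) := by
  set k : ℕ := ⌈|c| + |d|⌉₊ + 1 with hk
  have hkge : |c| + |d| ≤ (k:ℝ) - 1 := by
    have := Nat.le_ceil (|c| + |d|)
    push_cast [hk]
    push_cast at this
    linarith
  obtain ⟨C1, hC1, h1⟩ := strip k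
  -- compact part
  set K : Set ℂ := {w : ℂ | (c ≤ w.re ∧ w.re ≤ d ∧ |w.im| ≤ 1) ∧ ∀ κ : ℕ, r ≤ ‖w + κ‖} with hKdef
  have hKclosed : IsClosed K := by
    apply IsClosed.inter
    · apply IsClosed.inter
      · exact isClosed_le continuous_const Complex.continuous_re
      · apply IsClosed.inter
        · exact isClosed_le Complex.continuous_re continuous_const
        · exact isClosed_le (continuous_abs.comp Complex.continuous_im) continuous_const
    · have h4 : (⋂ κ : ℕ, {w : ℂ | r ≤ ‖w + κ‖})
          = {w : ℂ | ∀ κ : ℕ, r ≤ ‖w + κ‖} := by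
        ext w; simp
      show IsClosed {w : ℂ | ∀ κ : ℕ, r ≤ ‖w + κ‖}
      rw [← h4]
      exact isClosed_iInter fun κ => isClosed_le continuous_const
        (continuous_norm.comp (continuous_id.add continuous_const))
  have hKbdd : Bornology.IsBounded K := by
    apply (Metric.isBounded_closedBall (x := (0:ℂ)) (r := |c|+|d|+2)).subset
    intro w hw
    obtain ⟨⟨hw1, hw2, hw3⟩, _⟩ := hw
    simp only [Metric.mem_closedBall, dist_zero_right]
    have := Complex.norm_le_abs_re_add_abs_im w
    have hre : |w.re| ≤ |c| + |d| := by
      rw [abs_le]; constructor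
      · have : -|c| ≤ c := neg_abs_le c
        have : (0:ℝ) ≤ |d| := abs_nonneg d
        linarith [neg_abs_le c, abs_nonneg d]
      · linarith [le_abs_self d, abs_nonneg c]
    linarith
  have hKcompact : IsCompact K := Metric.isCompact_of_isClosed_isBounded hKclosed hKbdd
  have hcont : ContinuousOn Complex.Gamma K := by
    intro w hw
    refine (Complex.differentiableAt_Gamma w fun m => ?_).continuousAt.continuousWithinAt
    intro hwm
    have := hw.2 m
    rw [hwm] at this
    simp at this
    linarith
  obtain ⟨M, hM⟩ := hKcompact.exists_bound_of_continuousOn hcont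
  set m₀ : ℝ := Real.exp (-((|c|+|d|+1) * Real.log 2) - π/2) with hm₀
  have hm₀pos : 0 < m₀ := Real.exp_pos _
  set C2 : ℝ := (max M 1) / m₀ with hC2
  have hC2pos : 0 < C2 := by
    apply div_pos (lt_of_lt_of_le one_pos (le_max_right M 1)) hm₀pos
  refine ⟨max C1 C2, lt_of_lt_of_le hC1 (le_max_left _ _), fun w hwc hwd hpole => ?_⟩
  have hBpos : (0:ℝ) < |w.im| + 1 := by positivity
  have hEpos : (0:ℝ) < Real.exp (-(π*|w.im|)/2) := Real.exp_pos _
  have hrpos : (0:ℝ) < (|w.im|+1)^(w.re-1/2) := Real.rpow_pos_of_pos hBpos _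
  by_cases him : 1 ≤ |w.im|
  · have hb := h1 w.re w.im (by linarith [hkge, neg_abs_le c, abs_nonneg d, hwc])
      (by linarith [hkge, le_abs_self d, abs_nonneg c, hwd]) him
    rw [Complex.re_add_im w] at hb
    calc ‖Complex.Gamma w‖
        ≤ C1 * (|w.im|+1)^(w.re-1/2) * Real.exp (-(π*|w.im|)/2) := hb
      _ ≤ max C1 C2 * (|w.im|+1)^(w.re-1/2) * Real.exp (-(π*|w.im|)/2) := by
          apply mul_le_mul_of_nonneg_right
            (mul_le_mul_of_nonneg_right (le_max_left _ _) hrpos.le) hEpos.le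
  · push_neg at him
    have hwK : w ∈ K := ⟨⟨hwc, hwd, him.le⟩, hpole⟩
    have hΓ : ‖Complex.Gamma w‖ ≤ max M 1 := by
      have := hM w hwK
      exact le_trans this (le_max_left _ _)
    have hlower : m₀ ≤ (|w.im|+1)^(w.re-1/2) * Real.exp (-(π*|w.im|)/2) := by
      have hlogB : Real.log (|w.im|+1) ≤ Real.log 2 := by
        apply Real.log_le_log hBpos
        linarith
      have hlogB0 : 0 ≤ Real.log (|w.im|+1) := Real.log_nonneg (by linarith [abs_nonneg w.im])
      have hp : |w.re - 1/2| ≤ |c| + |d| + 1 := by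
        rw [abs_le]; constructor
        · linarith [neg_abs_le c, abs_nonneg d]
        · linarith [le_abs_self d, abs_nonneg c]
      have habs0 : 0 ≤ |w.im| := abs_nonneg w.im
      have key1 : -((|c|+|d|+1) * Real.log 2) ≤ (w.re-1/2) * Real.log (|w.im|+1) := by
        have h1' : -(|w.re-1/2|) * Real.log (|w.im|+1) ≤ (w.re-1/2) * Real.log (|w.im|+1) :=
          mul_le_mul_of_nonneg_right (neg_abs_le _) hlogB0
        have h2' : |w.re-1/2| * Real.log (|w.im|+1) ≤ (|c|+|d|+1) * Real.log 2 := by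
          apply mul_le_mul hp hlogB hlogB0 (by positivity)
        linarith
      have key2 : -(π/2) ≤ -(π*|w.im|)/2 := by nlinarith [Real.pi_pos]
      rw [Real.rpow_def_of_pos hBpos, hm₀, ← Real.exp_add]
      apply Real.exp_le_exp.2
      linarith
    calc ‖Complex.Gamma w‖ ≤ max M 1 := hΓ
      _ = C2 * m₀ := by rw [hC2]; field_simp
      _ ≤ C2 * ((|w.im|+1)^(w.re-1/2) * Real.exp (-(π*|w.im|)/2)) :=
          mul_le_mul_of_nonneg_left hlower hC2pos.le
      _ = C2 * (|w.im|+1)^(w.re-1/2) * Real.exp (-(π*|w.im|)/2) := by ring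
      _ ≤ max C1 C2 * (|w.im|+1)^(w.re-1/2) * Real.exp (-(π*|w.im|)/2) := by
          apply mul_le_mul_of_nonneg_right
            (mul_le_mul_of_nonneg_right (le_max_right _ _) hrpos.le) hEpos.le


lemma rpow_swap (B B' μ p P : ℝ) (hB : 1 ≤ B) (hB' : 1 ≤ B') (hμ : 0 ≤ μ)
    (h1 : B' ≤ B + μ) (h2 : B ≤ B' + μ) (hp : |p| ≤ P) :
    B'^p ≤ (1+μ)^P * B^p := by
  have hBpos : (0:ℝ) < B := by linarith
  have hB'pos : (0:ℝ) < B' := by linarith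
  have hμpos : (0:ℝ) < 1 + μ := by linarith
  have hB'le : B' ≤ B*(1+μ) := by nlinarith
  have hBle : B ≤ B'*(1+μ) := by nlinarith
  have l1 : Real.log B' ≤ Real.log B + Real.log (1+μ) := by
    calc Real.log B' ≤ Real.log (B*(1+μ)) := Real.log_le_log hB'pos hB'le
      _ = Real.log B + Real.log (1+μ) := Real.log_mul hBpos.ne' hμpos.ne'
  have l2 : Real.log B ≤ Real.log B' + Real.log (1+μ) := by
    calc Real.log B ≤ Real.log (B'*(1+μ)) := Real.log_le_log hBpos hBle
      _ = Real.log B' + Real.log (1+μ) := Real.log_mul hB'pos.ne' hμpos.ne'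
  have hlog1μ : 0 ≤ Real.log (1+μ) := Real.log_nonneg (by linarith)
  have hP : 0 ≤ P := le_trans (abs_nonneg p) hp
  have key : p * Real.log B' ≤ p * Real.log B + P * Real.log (1+μ) := by
    rcases le_or_gt 0 p with hp0 | hp0
    · nlinarith [mul_le_mul_of_nonneg_left l1 hp0,
        mul_le_mul_of_nonneg_right (le_trans (le_abs_self p) hp) hlog1μ]
    · nlinarith [mul_le_mul_of_nonneg_left l2 (by linarith : (0:ℝ) ≤ -p),
        mul_le_mul_of_nonneg_right (le_trans (neg_le_abs p) hp) hlog1μ]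
  calc B'^p = Real.exp (p * Real.log B') := by
        rw [Real.rpow_def_of_pos hB'pos, mul_comm]
    _ ≤ Real.exp (p * Real.log B + P * Real.log (1+μ)) := Real.exp_le_exp.2 key
    _ = (1+μ)^P * B^p := by
        rw [Real.exp_add, Real.rpow_def_of_pos hBpos, Real.rpow_def_of_pos hμpos,
          mul_comm (Real.log B) p, mul_comm (Real.log (1+μ)) P, mul_comm]

/-- Uniform vertical-strip bound for the gamma factor
`G(s; ς, λ) = ∏_l Γ(s − λ_l)·e^{ς_l·πi(s−λ_l)/2}`, away from discs around the poles. -/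
theorem stmt_3 (n : ℕ) (hn : 1 ≤ n) (lam : Fin n → ℂ) (a b : ℝ) (hab : a ≤ b)
    (r : ℝ) (hr : 0 < r) :
    ∃ C > 0, ∀ ς : Fin n → ℂ, (∀ l, ς l = 1 ∨ ς l = -1) → ∀ s : ℂ,
      a ≤ s.re → s.re ≤ b →
      (∀ (l : Fin n) (κ : ℕ), r ≤ ‖s - (lam l - (κ : ℂ))‖) →
      ‖∏ l, Complex.Gamma (s - lam l) *
          Complex.exp (ς l * (π : ℂ) * Complex.I * (s - lam l) / 2)‖
        ≤ C * (|s.im| + 1) ^ ((n : ℝ) * (s.re - 1 / 2) - ∑ l, (lam l).re) := by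
  have hD := fun l : Fin n => gammaStrip (a - (lam l).re) (b - (lam l).re) r
    (by linarith) hr
  choose D hDpos hDbound using hD
  set E : Fin n → ℝ := fun l =>
    D l * (1 + |(lam l).im|)^(|a| + |b| + |(lam l).re| + 1) with hE
  have hEpos : ∀ l, 0 < E l := fun l => by
    have := hDpos l
    positivity
  refine ⟨∏ l, E l, Finset.prod_pos (fun l _ => hEpos l), fun ς hς s has hbs hpole => ?_⟩
  have hB : (1:ℝ) ≤ |s.im| + 1 := by linarith [abs_nonneg s.im]
  have hfac : ∀ l : Fin n,
      ‖Complex.Gamma (s - lam l) *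
          Complex.exp (ς l * (π : ℂ) * Complex.I * (s - lam l) / 2)‖
        ≤ E l * (|s.im|+1)^(s.re - (lam l).re - 1/2) := by
    intro l
    set w : ℂ := s - lam l with hw
    have hwre : w.re = s.re - (lam l).re := by simp [hw]
    have hwim : w.im = s.im - (lam l).im := by simp [hw]
    have hΓ := hDbound l w (by rw [hwre]; linarith) (by rw [hwre]; linarith)
      (fun κ => by
        have := hpole l κ
        have heq : s - (lam l - (κ:ℂ)) = w + κ := by rw [hw]; ring
        rwa [heq] at this)
    -- bound the exponential factor
    have hexp : ‖Complex.exp (ς l * (π : ℂ) * Complex.I * w / 2)‖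
        ≤ Real.exp (π * |w.im| / 2) := by
      rw [Complex.norm_exp]
      apply Real.exp_le_exp.2
      rcases hς l with h | h <;> rw [h]
      · have : ((1:ℂ) * (π : ℂ) * Complex.I * w / 2).re = -(π * w.im)/2 := by
          simp [Complex.div_re, Complex.mul_re, Complex.mul_im]
          try ring
        rw [this]
        rcases abs_cases w.im with ⟨h', _⟩ | ⟨h', _⟩ <;> rw [h'] <;>
          nlinarith [Real.pi_pos, abs_nonneg w.im, le_abs_self w.im, neg_le_abs w.im]
      · have : ((-1:ℂ) * (π : ℂ) * Complex.I * w / 2).re = (π * w.im)/2 := by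
          simp [Complex.div_re, Complex.mul_re, Complex.mul_im]
          try ring
        rw [this]
        rcases abs_cases w.im with ⟨h', _⟩ | ⟨h', _⟩ <;> rw [h'] <;>
          nlinarith [Real.pi_pos, abs_nonneg w.im, le_abs_self w.im, neg_le_abs w.im]
    have hB' : (1:ℝ) ≤ |w.im| + 1 := by linarith [abs_nonneg w.im]
    have hswap : (|w.im|+1)^(w.re-1/2)
        ≤ (1 + |(lam l).im|)^(|a| + |b| + |(lam l).re| + 1) * (|s.im|+1)^(w.re-1/2) := by
      apply rpow_swap _ _ _ _ _ hB hB' (abs_nonneg _)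
      · rw [hwim]
        calc |s.im - (lam l).im| + 1 ≤ |s.im| + |(lam l).im| + 1 := by
              linarith [abs_sub s.im (lam l).im]
          _ = |s.im| + 1 + |(lam l).im| := by ring
      · rw [hwim]
        have : |s.im| ≤ |s.im - (lam l).im| + |(lam l).im| := by
          calc |s.im| = |s.im - (lam l).im + (lam l).im| := by ring_nf
            _ ≤ |s.im - (lam l).im| + |(lam l).im| := abs_add_le _ _
        linarith
      · rw [hwre, abs_le]
        constructor
        · have : -|a| ≤ a := neg_abs_le a
          have h2 : -|(lam l).re| ≤ -(lam l).re ∨ True := Or.inr trivial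
          have := neg_abs_le (lam l).re
          have := le_abs_self (lam l).re
          linarith [le_abs_self b, abs_nonneg b]
        · linarith [le_abs_self b, neg_abs_le (lam l).re, le_abs_self (lam l).re,
            abs_nonneg a, neg_abs_le a]
    calc ‖Complex.Gamma w * Complex.exp (ς l * (π : ℂ) * Complex.I * w / 2)‖
        = ‖Complex.Gamma w‖ * ‖Complex.exp (ς l * (π : ℂ) * Complex.I * w / 2)‖ := norm_mul _ _
      _ ≤ (D l * (|w.im|+1)^(w.re-1/2) * Real.exp (-(π*|w.im|)/2)) * Real.exp (π * |w.im| / 2) := by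
          apply mul_le_mul hΓ hexp (norm_nonneg _) (by have := hDpos l; positivity)
      _ = D l * (|w.im|+1)^(w.re-1/2) := by
          have hz : -(π*|w.im|)/2 + π*|w.im|/2 = 0 := by ring
          rw [mul_assoc, ← Real.exp_add, hz, Real.exp_zero, mul_one]
      _ ≤ D l * ((1 + |(lam l).im|)^(|a| + |b| + |(lam l).re| + 1) * (|s.im|+1)^(w.re-1/2)) :=
          mul_le_mul_of_nonneg_left hswap (hDpos l).le
      _ = E l * (|s.im|+1)^(s.re - (lam l).re - 1/2) := by
          rw [hE, hwre]; ring
  calc ‖∏ l, Complex.Gamma (s - lam l) *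
          Complex.exp (ς l * (π : ℂ) * Complex.I * (s - lam l) / 2)‖
      = ∏ l, ‖Complex.Gamma (s - lam l) *
          Complex.exp (ς l * (π : ℂ) * Complex.I * (s - lam l) / 2)‖ := norm_prod _ _
    _ ≤ ∏ l, E l * (|s.im|+1)^(s.re - (lam l).re - 1/2) :=
        Finset.prod_le_prod (fun l _ => norm_nonneg _) (fun l _ => hfac l)
    _ = (∏ l, E l) * ∏ l, (|s.im|+1)^(s.re - (lam l).re - 1/2) := Finset.prod_mul_distrib
    _ = (∏ l, E l) * (|s.im| + 1) ^ ((n : ℝ) * (s.re - 1 / 2) - ∑ l, (lam l).re) := by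
        congr 1
        rw [← Real.rpow_sum_of_pos (by linarith : (0:ℝ) < |s.im|+1)]
        congr 1
        simp only [Finset.sum_sub_distrib, Finset.sum_const, Finset.card_univ,
          Fintype.card_fin, smul_eq_mul]
        push_cast
        ring
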